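/- arXiv:1806.10191 — 2 statements merged into one kernel-verified Lean document; each statement's English description precedes it below -/
import Mathlib

section
/- Assume P is uniformly elliptic with constant α > 0 (ξ·P(x)ξ ≥ α|ξ|² for a.e. x ∈ Ω and all ξ ∈ ℝ^m), |r_k(x)| ≤ R_k a.e. on Ω with B = (Σ_k R_k²)^{1/2}, and q1(x) ≥ α/2 + B²/(2α) for a.e. x ∈ Ω. Then for all u1, u2 ∈ C¹_c(Ω), the quadratic form satisfies a((u1,u2),(u1,u2)) ≥ (α/2)(‖u1‖₁² + ‖u2‖₁²); in particular the bilinear form a is coercive on pairs of functions in C¹_c(Ω) with respect to the norm (‖u1‖₁² + ‖u2‖₁²)^{1/2}. -/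
open MeasureTheory Matrix

/-- The gradient of `u : ℝ^m → ℝ` at `x`, as the vector of partial derivatives. -/
noncomputable def grad (m : ℕ) (u : (Fin m → ℝ) → ℝ) (x : Fin m → ℝ) : Fin m → ℝ :=
  fun i => fderiv ℝ u x (Pi.single i 1)

/-- `u ∈ C¹_c(Ω)`: continuously differentiable with compact support contained in `Ω`. -/
def C1c (m : ℕ) (Ω : Set (Fin m → ℝ)) (u : (Fin m → ℝ) → ℝ) : Prop :=
  ContDiff ℝ 1 u ∧ HasCompactSupport u ∧ tsupport u ⊆ Ω

/-- `‖u‖₀ = (∫_Ω u²)^(1/2)`. -/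
noncomputable def normL2 (m : ℕ) (Ω : Set (Fin m → ℝ)) (u : (Fin m → ℝ) → ℝ) : ℝ :=
  Real.sqrt (∫ x in Ω, (u x) ^ 2)

/-- `|u|₁ = (∫_Ω |∇u|²)^(1/2)`. -/
noncomputable def semiH1 (m : ℕ) (Ω : Set (Fin m → ℝ)) (u : (Fin m → ℝ) → ℝ) : ℝ :=
  Real.sqrt (∫ x in Ω, ∑ i, (grad m u x i) ^ 2)

/-- `‖u‖₁ = (‖u‖₀² + |u|₁²)^(1/2)`. -/
noncomputable def normH1 (m : ℕ) (Ω : Set (Fin m → ℝ)) (u : (Fin m → ℝ) → ℝ) : ℝ :=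
  Real.sqrt ((normL2 m Ω u) ^ 2 + (semiH1 m Ω u) ^ 2)

/-- The bilinear form of the coupled elliptic system:
`a(u,v) = ∫_Ω [∇v1·P∇u1 + ∇v2·P∇u2] + ∫_Ω [v1 (R·∇u1) + v2 (R·∇u2)]
        + ∫_Ω [q1 u1 v1 + q2 u2 v1 + q1 u2 v2 − q2 u1 v2]`. -/
noncomputable def aForm (m : ℕ) (Ω : Set (Fin m → ℝ))
    (P : (Fin m → ℝ) → Matrix (Fin m) (Fin m) ℝ)
    (Rv : (Fin m → ℝ) → Fin m → ℝ) (q1 q2 : (Fin m → ℝ) → ℝ)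
    (u1 u2 v1 v2 : (Fin m → ℝ) → ℝ) : ℝ :=
  (∫ x in Ω, (grad m v1 x ⬝ᵥ (P x).mulVec (grad m u1 x)
      + grad m v2 x ⬝ᵥ (P x).mulVec (grad m u2 x)))
  + (∫ x in Ω, (v1 x * (Rv x ⬝ᵥ grad m u1 x) + v2 x * (Rv x ⬝ᵥ grad m u2 x)))
  + (∫ x in Ω, (q1 x * u1 x * v1 x + q2 x * u2 x * v1 x
      + q1 x * u2 x * v2 x - q2 x * u1 x * v2 x))

/-!
Pointwise, ellipticity bounds `∇u·P∇u` below by `α|∇u|²`, the coupling terms in `q2` cancel in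
`a(u,u)`, and Young's inequality `|u (R·∇u)| ≤ B|u||∇u| ≤ (α/2)|∇u|² + (B²/(2α)) u²` absorbs the
convection term: half of the ellipticity and the excess `B²/(2α)` of `q1` pay for it, leaving
`(α/2)(u² + |∇u|²)` for each component. Integrating this a.e. inequality gives the claim; every
integrand is a bounded measurable coefficient times a continuous compactly supported function,
hence integrable.
-/

lemma neg_add_le_of_sq_le_four_mul {a b t : ℝ} (ha : 0 ≤ a) (hb : 0 ≤ b)
    (ht : t ^ 2 ≤ 4 * a * b) : -(a + b) ≤ t := by
  nlinarith [sq_nonneg (a - b), sq_nonneg (a + b)]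

lemma sq_dotProduct_le_of_abs_le {m : ℕ} {r R : Fin m → ℝ} (hr : ∀ k, |r k| ≤ R k)
    (ξ : Fin m → ℝ) : (r ⬝ᵥ ξ) ^ 2 ≤ (∑ k, R k ^ 2) * ∑ i, ξ i ^ 2 := by
  have hrR : ∀ k, r k ^ 2 ≤ R k ^ 2 := fun k => sq_le_sq.mpr ((hr k).trans (le_abs_self _))
  calc (r ⬝ᵥ ξ) ^ 2 ≤ (∑ k, r k ^ 2) * ∑ i, ξ i ^ 2 :=
        Finset.sum_mul_sq_le_sq_mul_sq _ _ _
    _ ≤ (∑ k, R k ^ 2) * ∑ i, ξ i ^ 2 :=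
        mul_le_mul_of_nonneg_right (Finset.sum_le_sum fun k _ => hrR k)
          (Finset.sum_nonneg fun i _ => sq_nonneg _)

lemma half_mul_sq_add_le_of_young {α b a e t q s : ℝ} (hα : 0 < α) (hb : 0 ≤ b) (ha : 0 ≤ a)
    (he : α * a ≤ e) (ht : t ^ 2 ≤ b * a) (hq : α / 2 + b / (2 * α) ≤ q) :
    α / 2 * (s ^ 2 + a) ≤ e + s * t + q * s * s := by
  have hyoung : -(α / 2 * a + b / (2 * α) * s ^ 2) ≤ s * t := by
    refine neg_add_le_of_sq_le_four_mul (by positivity) (by positivity) ?_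
    have h4 : 4 * (α / 2 * a) * (b / (2 * α) * s ^ 2) = s ^ 2 * (b * a) := by
      field_simp
      ring
    rw [h4, mul_pow]
    exact mul_le_mul_of_nonneg_left ht (sq_nonneg s)
  nlinarith [mul_le_mul_of_nonneg_right hq (sq_nonneg s)]

lemma integrable_sq_of_hasCompactSupport {X : Type*} [TopologicalSpace X]
    [MeasurableSpace X] [OpensMeasurableSpace X] {μ : Measure X} [IsFiniteMeasureOnCompacts μ]
    {f : X → ℝ} (hf : Continuous f) (hfc : HasCompactSupport f) :
    Integrable (fun x => f x ^ 2) μ := by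
  simp only [sq]
  exact (hf.mul hf).integrable_of_hasCompactSupport hfc.mul_right

lemma integrable_bdd_mul_of_hasCompactSupport {X : Type*} [TopologicalSpace X]
    [MeasurableSpace X] [OpensMeasurableSpace X] {μ : Measure X} [IsFiniteMeasureOnCompacts μ]
    {q f : X → ℝ} {C : ℝ} (hq : AEStronglyMeasurable q μ) (hqC : ∀ᵐ x ∂μ, |q x| ≤ C)
    (hf : Continuous f) (hfc : HasCompactSupport f) :
    Integrable (fun x => q x * f x) μ :=
  (hf.integrable_of_hasCompactSupport hfc).bdd_mul hq (by simpa only [Real.norm_eq_abs] using hqC)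

noncomputable def energyDensity (m : ℕ) (P : (Fin m → ℝ) → Matrix (Fin m) (Fin m) ℝ)
    (Rv : (Fin m → ℝ) → Fin m → ℝ) (q u : (Fin m → ℝ) → ℝ) (x : Fin m → ℝ) : ℝ :=
  grad m u x ⬝ᵥ (P x).mulVec (grad m u x) + u x * (Rv x ⬝ᵥ grad m u x) + q x * u x * u x

lemma half_mul_sq_add_le_energyDensity {m : ℕ} {P : (Fin m → ℝ) → Matrix (Fin m) (Fin m) ℝ}
    {Rv : (Fin m → ℝ) → Fin m → ℝ} {R : Fin m → ℝ} {q : (Fin m → ℝ) → ℝ} {α : ℝ} {x : Fin m → ℝ}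
    (hα : 0 < α) (hell : ∀ ξ : Fin m → ℝ, α * ∑ i, ξ i ^ 2 ≤ ξ ⬝ᵥ (P x).mulVec ξ)
    (hR : ∀ k, |Rv x k| ≤ R k) (hq : α / 2 + (∑ k, R k ^ 2) / (2 * α) ≤ q x)
    (u : (Fin m → ℝ) → ℝ) :
    α / 2 * (u x ^ 2 + ∑ i, grad m u x i ^ 2) ≤ energyDensity m P Rv q u x :=
  half_mul_sq_add_le_of_young hα (Finset.sum_nonneg fun _ _ => sq_nonneg _)
    (Finset.sum_nonneg fun _ _ => sq_nonneg _) (hell _) (sq_dotProduct_le_of_abs_le hR _) hq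

namespace C1c

variable {m : ℕ} {Ω : Set (Fin m → ℝ)} {u : (Fin m → ℝ) → ℝ}

lemma continuous_grad (hu : C1c m Ω u) (i : Fin m) : Continuous fun x => grad m u x i :=
  (hu.1.continuous_fderiv one_ne_zero).clm_apply continuous_const

lemma hasCompactSupport_grad (hu : C1c m Ω u) (i : Fin m) :
    HasCompactSupport fun x => grad m u x i :=
  hu.2.1.fderiv_apply ℝ (Pi.single i 1)

variable {μ : Measure (Fin m → ℝ)} [IsFiniteMeasureOnCompacts μ]

lemma integrable_sq (hu : C1c m Ω u) : Integrable (fun x => u x ^ 2) μ :=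
  integrable_sq_of_hasCompactSupport hu.1.continuous hu.2.1

lemma integrable_sum_sq_grad (hu : C1c m Ω u) :
    Integrable (fun x => ∑ i, grad m u x i ^ 2) μ :=
  integrable_finsetSum _ fun i _ =>
    integrable_sq_of_hasCompactSupport (hu.continuous_grad i) (hu.hasCompactSupport_grad i)

variable {P : (Fin m → ℝ) → Matrix (Fin m) (Fin m) ℝ} {Rv : (Fin m → ℝ) → Fin m → ℝ}
  {R : Fin m → ℝ} {q : (Fin m → ℝ) → ℝ} {M Q : ℝ}

lemma integrable_dotProduct_mulVec_grad (hu : C1c m Ω u)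
    (hPm : ∀ i j, Measurable fun x => P x i j) (hPbd : ∀ᵐ x ∂μ, ∀ i j, |P x i j| ≤ M) :
    Integrable (fun x => grad m u x ⬝ᵥ (P x).mulVec (grad m u x)) μ := by
  have hP : Integrable (fun x => ∑ i, ∑ j, P x i j * (grad m u x i * grad m u x j)) μ :=
    integrable_finsetSum _ fun i _ => integrable_finsetSum _ fun j _ =>
      integrable_bdd_mul_of_hasCompactSupport (hPm i j).aestronglyMeasurable
        (hPbd.mono fun x h => h i j) ((hu.continuous_grad i).mul (hu.continuous_grad j))
        (hu.hasCompactSupport_grad i).mul_right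
  refine hP.congr (Filter.Eventually.of_forall fun x => ?_)
  simp only [dotProduct, mulVec, Finset.mul_sum]
  exact Finset.sum_congr rfl fun i _ => Finset.sum_congr rfl fun j _ => by ring

lemma integrable_mul_dotProduct_grad (hu : C1c m Ω u)
    (hRm : ∀ k, Measurable fun x => Rv x k) (hRbd : ∀ᵐ x ∂μ, ∀ k, |Rv x k| ≤ R k) :
    Integrable (fun x => u x * (Rv x ⬝ᵥ grad m u x)) μ := by
  have hR : Integrable (fun x => ∑ k, Rv x k * (u x * grad m u x k)) μ :=
    integrable_finsetSum _ fun k _ =>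
      integrable_bdd_mul_of_hasCompactSupport (hRm k).aestronglyMeasurable
        (hRbd.mono fun x h => h k) (hu.1.continuous.mul (hu.continuous_grad k)) hu.2.1.mul_right
  refine hR.congr (Filter.Eventually.of_forall fun x => ?_)
  simp only [dotProduct, Finset.mul_sum]
  exact Finset.sum_congr rfl fun k _ => by ring

lemma integrable_mul_mul_self (hu : C1c m Ω u) (hqm : Measurable q)
    (hqbd : ∀ᵐ x ∂μ, |q x| ≤ Q) : Integrable (fun x => q x * u x * u x) μ := by
  simp only [mul_assoc]
  exact integrable_bdd_mul_of_hasCompactSupport hqm.aestronglyMeasurable hqbd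
    (hu.1.continuous.mul hu.1.continuous) hu.2.1.mul_right

lemma integrable_energyDensity (hu : C1c m Ω u)
    (hPm : ∀ i j, Measurable fun x => P x i j) (hPbd : ∀ᵐ x ∂μ, ∀ i j, |P x i j| ≤ M)
    (hRm : ∀ k, Measurable fun x => Rv x k) (hRbd : ∀ᵐ x ∂μ, ∀ k, |Rv x k| ≤ R k)
    (hqm : Measurable q) (hqbd : ∀ᵐ x ∂μ, |q x| ≤ Q) :
    Integrable (energyDensity m P Rv q u) μ :=
  ((hu.integrable_dotProduct_mulVec_grad hPm hPbd).add
    (hu.integrable_mul_dotProduct_grad hRm hRbd)).add (hu.integrable_mul_mul_self hqm hqbd)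

lemma integrable_sq_add_sum_sq_grad (hu : C1c m Ω u) :
    Integrable (fun x => u x ^ 2 + ∑ i, grad m u x i ^ 2) μ :=
  hu.integrable_sq.add hu.integrable_sum_sq_grad

lemma normH1_sq (hu : C1c m Ω u) :
    normH1 m Ω u ^ 2 = ∫ x in Ω, (u x ^ 2 + ∑ i, grad m u x i ^ 2) := by
  rw [normH1, normL2, semiH1, Real.sq_sqrt (by positivity),
    Real.sq_sqrt (integral_nonneg fun x => sq_nonneg _),
    Real.sq_sqrt (integral_nonneg fun x => Finset.sum_nonneg fun i _ => sq_nonneg _),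
    integral_add hu.integrable_sq hu.integrable_sum_sq_grad]

end C1c

lemma aForm_self_eq_integral_energyDensity {m : ℕ} {Ω : Set (Fin m → ℝ)}
    {P : (Fin m → ℝ) → Matrix (Fin m) (Fin m) ℝ} (hPm : ∀ i j, Measurable fun x => P x i j)
    {M : ℝ} (hPbd : ∀ᵐ x ∂(volume.restrict Ω), ∀ i j, |P x i j| ≤ M)
    {Rv : (Fin m → ℝ) → Fin m → ℝ} (hRm : ∀ k, Measurable fun x => Rv x k)
    {R : Fin m → ℝ} (hRbd : ∀ᵐ x ∂(volume.restrict Ω), ∀ k, |Rv x k| ≤ R k)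
    {q1 : (Fin m → ℝ) → ℝ} (hq1m : Measurable q1)
    {Q1 : ℝ} (hq1bd : ∀ᵐ x ∂(volume.restrict Ω), |q1 x| ≤ Q1) (q2 : (Fin m → ℝ) → ℝ)
    {u1 u2 : (Fin m → ℝ) → ℝ} (hu1 : C1c m Ω u1) (hu2 : C1c m Ω u2) :
    aForm m Ω P Rv q1 q2 u1 u2 u1 u2 =
      ∫ x in Ω, (energyDensity m P Rv q1 u1 x + energyDensity m P Rv q1 u2 x) := by
  have hq2_cancel : ∫ x in Ω, (q1 x * u1 x * u1 x + q2 x * u2 x * u1 x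
      + q1 x * u2 x * u2 x - q2 x * u1 x * u2 x) =
      ∫ x in Ω, (q1 x * u1 x * u1 x + q1 x * u2 x * u2 x) :=
    integral_congr_ae (Filter.Eventually.of_forall fun x => by ring)
  have hP1 := hu1.integrable_dotProduct_mulVec_grad hPm hPbd
  have hP2 := hu2.integrable_dotProduct_mulVec_grad hPm hPbd
  have hR1 := hu1.integrable_mul_dotProduct_grad hRm hRbd
  have hR2 := hu2.integrable_mul_dotProduct_grad hRm hRbd
  rw [aForm, hq2_cancel, ← integral_add, ← integral_add]
  · refine integral_congr_ae (Filter.Eventually.of_forall fun x => ?_)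
    simp only [energyDensity]
    ring
  · exact (hP1.add hP2).add (hR1.add hR2)
  · exact (hu1.integrable_mul_mul_self hq1m hq1bd).add (hu2.integrable_mul_mul_self hq1m hq1bd)
  · exact hP1.add hP2
  · exact hR1.add hR2

theorem stmt3_general (m : ℕ)
    (Ω : Set (Fin m → ℝ))
    (P : (Fin m → ℝ) → Matrix (Fin m) (Fin m) ℝ)
    (hPm : ∀ i j, Measurable fun x => P x i j)
    (M : ℝ) (hPbd : ∀ᵐ x ∂(volume.restrict Ω), ∀ i j, |P x i j| ≤ M)
    (α : ℝ) (hα : 0 < α)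
    (hell : ∀ᵐ x ∂(volume.restrict Ω), ∀ ξ : Fin m → ℝ,
      α * ∑ i, (ξ i) ^ 2 ≤ ξ ⬝ᵥ (P x).mulVec ξ)
    (Rv : (Fin m → ℝ) → Fin m → ℝ) (hRm : ∀ k, Measurable fun x => Rv x k)
    (R : Fin m → ℝ) (hRbd : ∀ᵐ x ∂(volume.restrict Ω), ∀ k, |Rv x k| ≤ R k)
    (B : ℝ) (hB : B = Real.sqrt (∑ k, (R k) ^ 2))
    (q1 q2 : (Fin m → ℝ) → ℝ) (hq1m : Measurable q1)
    (Q1 : ℝ)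
    (hq1bd : ∀ᵐ x ∂(volume.restrict Ω), |q1 x| ≤ Q1)
    (hq1lb : ∀ᵐ x ∂(volume.restrict Ω), α / 2 + B ^ 2 / (2 * α) ≤ q1 x)
    (u1 u2 : (Fin m → ℝ) → ℝ) (hu1 : C1c m Ω u1) (hu2 : C1c m Ω u2) :
    α / 2 * ((normH1 m Ω u1) ^ 2 + (normH1 m Ω u2) ^ 2) ≤
      aForm m Ω P Rv q1 q2 u1 u2 u1 u2 := by
  have hB2 : B ^ 2 = ∑ k, R k ^ 2 := hB ▸ Real.sq_sqrt (Finset.sum_nonneg fun k _ => sq_nonneg _)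
  have hD1 := hu1.integrable_sq_add_sum_sq_grad.const_mul (μ := volume.restrict Ω) (α / 2)
  have hD2 := hu2.integrable_sq_add_sum_sq_grad.const_mul (μ := volume.restrict Ω) (α / 2)
  rw [aForm_self_eq_integral_energyDensity hPm hPbd hRm hRbd hq1m hq1bd q2 hu1 hu2,
    hu1.normH1_sq, hu2.normH1_sq, mul_add, ← integral_const_mul, ← integral_const_mul,
    ← integral_add hD1 hD2]
  refine integral_mono_ae (hD1.add hD2)
    ((hu1.integrable_energyDensity hPm hPbd hRm hRbd hq1m hq1bd).add
      (hu2.integrable_energyDensity hPm hPbd hRm hRbd hq1m hq1bd)) ?_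
  filter_upwards [hell, hRbd, hq1lb] with x hellx hRx hqx
  rw [hB2] at hqx
  exact add_le_add (half_mul_sq_add_le_energyDensity hα hellx hRx hqx u1)
    (half_mul_sq_add_le_energyDensity hα hellx hRx hqx u2)

theorem stmt3 (m : ℕ) (hm : 1 ≤ m)
    (Ω : Set (Fin m → ℝ)) (hΩo : IsOpen Ω) (hΩb : Bornology.IsBounded Ω)
    (P : (Fin m → ℝ) → Matrix (Fin m) (Fin m) ℝ)
    (hPm : ∀ i j, Measurable fun x => P x i j)
    (M : ℝ) (hPbd : ∀ᵐ x ∂(volume.restrict Ω), ∀ i j, |P x i j| ≤ M)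
    (hPsymm : ∀ᵐ x ∂(volume.restrict Ω), (P x).IsSymm)
    (α : ℝ) (hα : 0 < α)
    (hell : ∀ᵐ x ∂(volume.restrict Ω), ∀ ξ : Fin m → ℝ,
      α * ∑ i, (ξ i) ^ 2 ≤ ξ ⬝ᵥ (P x).mulVec ξ)
    (Rv : (Fin m → ℝ) → Fin m → ℝ) (hRm : ∀ k, Measurable fun x => Rv x k)
    (R : Fin m → ℝ) (hRbd : ∀ᵐ x ∂(volume.restrict Ω), ∀ k, |Rv x k| ≤ R k)
    (B : ℝ) (hB : B = Real.sqrt (∑ k, (R k) ^ 2))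
    (q1 q2 : (Fin m → ℝ) → ℝ) (hq1m : Measurable q1) (hq2m : Measurable q2)
    (Q1 Q2 : ℝ)
    (hq1bd : ∀ᵐ x ∂(volume.restrict Ω), |q1 x| ≤ Q1)
    (hq2bd : ∀ᵐ x ∂(volume.restrict Ω), |q2 x| ≤ Q2)
    (hq1lb : ∀ᵐ x ∂(volume.restrict Ω), α / 2 + B ^ 2 / (2 * α) ≤ q1 x)
    (u1 u2 : (Fin m → ℝ) → ℝ) (hu1 : C1c m Ω u1) (hu2 : C1c m Ω u2) :
    α / 2 * ((normH1 m Ω u1) ^ 2 + (normH1 m Ω u2) ^ 2) ≤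
      aForm m Ω P Rv q1 q2 u1 u2 u1 u2 :=
  stmt3_general m Ω P hPm M hPbd α hα hell Rv hRm R hRbd B hB q1 q2 hq1m Q1 hq1bd hq1lb u1 u2 hu1
    hu2
end

section
/- Suppose P : ℝ^m → ℝ^{m×m} has continuously differentiable entries, P(x) is symmetric, and ξ·P(x)ξ ≥ α|ξ|² for all x ∈ Ω and all ξ ∈ ℝ^m with α > 0; suppose R = (r_1,…,r_m) : ℝ^m → ℝ^m is continuous with |r_k(x)| ≤ R_k on Ω and B = (Σ_k R_k²)^{1/2}; suppose q1, q2 : ℝ^m → ℝ are continuous with q1(x) ≥ α/2 + B²/(2α) on Ω; and let f1, f2 : Ω → ℝ. If (u1,u2) and (v1,v2) are two pairs of twice continuously differentiable functions on ℝ^m whose supports are compact and contained in Ω, and both pairs satisfy pointwise on Ω the coupled system −∇·(P∇w1) + R·∇w1 + q1 w1 + q2 w2 = f1 and −∇·(P∇w2) + R·∇w2 + q1 w2 − q2 w1 = f2, then u1 = v1 and u2 = v2. -/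
/-!
A maximum principle argument. The differences `w₁ = u₁ - v₁`, `w₂ = u₂ - v₂` solve the
homogeneous system, and `F = w₁² + w₂²` is a compactly supported `C²` function, so it attains
its maximum at some `x`. If `F x > 0` then `x ∈ Ω`; there `∇F = 0` and the Hessian of `F` is
negative semidefinite, so pairing it with the positive semidefinite `P x` (Schur product theorem)
gives `-∇·(P∇F) + R·∇F ≥ 0` at `x`. On the other hand, `w₁` times the first equation plus `w₂`
times the second (the `q₂`-coupling cancels) reads
`½ (-∇·(P∇F) + R·∇F) + ∇w₁·P∇w₁ + ∇w₂·P∇w₂ + q₁ F = 0`, which is impossible because `q₁ > 0`.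
-/

open MeasureTheory Matrix

/-- The divergence `∇·(P∇w)` at `x`:
`∑ i ∂/∂x_i ( (P ∇w)_i )`. -/
noncomputable def divPgrad (m : ℕ) (P : (Fin m → ℝ) → Matrix (Fin m) (Fin m) ℝ)
    (w : (Fin m → ℝ) → ℝ) (x : Fin m → ℝ) : ℝ :=
  ∑ i, fderiv ℝ (fun y => (P y).mulVec (grad m w y) i) x (Pi.single i 1)

theorem IsLocalMax.deriv_deriv_nonpos {g : ℝ → ℝ} {a : ℝ} (h : IsLocalMax g a)
    (hg : Differentiable ℝ g) : deriv (deriv g) a ≤ 0 := by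
  by_contra! hpos
  -- `g'` vanishes at `a` and increases through it, so `g` increases to the right of `a`
  have hsign := eventually_nhdsWithin_sign_eq_of_deriv_pos hpos h.deriv_eq_zero
  obtain ⟨ε, hε, hball⟩ := Metric.eventually_nhds_iff_ball.1 (hsign.and h)
  obtain ⟨c, hc, hslope⟩ := exists_deriv_eq_slope g (lt_add_of_pos_right a (half_pos hε))
    hg.continuous.continuousOn hg.differentiableOn
  have hc_mem : c ∈ Metric.ball a ε := by
    rw [Real.ball_eq_Ioo]; constructor <;> linarith [hc.1, hc.2]
  have hderiv_pos : 0 < deriv g c := by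
    rw [← sign_eq_one_iff, (hball c hc_mem).1, sign_eq_one_iff, sub_pos]; exact hc.1
  have ht_mem : a + ε / 2 ∈ Metric.ball a ε := by
    rw [Real.ball_eq_Ioo]; constructor <;> linarith
  rw [hslope, add_sub_cancel_left, div_pos_iff_of_pos_right (half_pos hε)] at hderiv_pos
  linarith [(hball _ ht_mem).2]

theorem IsLocalMax.fderiv_fderiv_apply_self_nonpos {E : Type*} [NormedAddCommGroup E]
    [NormedSpace ℝ E] {F : E → ℝ} {x : E} (h : IsLocalMax F x) (hF : Differentiable ℝ F)
    (hF' : DifferentiableAt ℝ (fderiv ℝ F) x) (ξ : E) :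
    fderiv ℝ (fderiv ℝ F) x ξ ξ ≤ 0 := by
  set γ : ℝ → E := fun t => x + t • ξ with hγ_def
  have hγ : ∀ t, HasDerivAt γ ξ t := fun t => by
    rw [hγ_def]; simpa using ((hasDerivAt_id t).smul_const ξ).const_add x
  have hγ0 : γ 0 = x := by simp [γ]
  have hderiv : deriv (F ∘ γ) = fun t => fderiv ℝ F (γ t) ξ :=
    funext fun t => ((hF _).hasFDerivAt.comp_hasDerivAt t (hγ t)).deriv
  have hderiv2 : HasDerivAt (fun t => fderiv ℝ F (γ t) ξ) (fderiv ℝ (fderiv ℝ F) x ξ ξ) 0 := by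
    have := (hF'.hasFDerivAt.comp_hasDerivAt_of_eq 0 (hγ 0) hγ0.symm).clm_apply
      (hasDerivAt_const (0 : ℝ) ξ)
    simpa using this
  have hmax : IsLocalMax (F ∘ γ) 0 := (hγ0 ▸ h).comp_continuous (hγ 0).continuousAt
  have := hmax.deriv_deriv_nonpos fun t =>
    ((hF _).hasFDerivAt.comp_hasDerivAt t (hγ t)).differentiableAt
  rwa [hderiv, hderiv2.deriv] at this

noncomputable def hessianMatrix {ι : Type*} [Fintype ι] [DecidableEq ι] (F : (ι → ℝ) → ℝ)
    (x : ι → ℝ) : Matrix ι ι ℝ :=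
  of fun i j => fderiv ℝ (fderiv ℝ F) x (Pi.single i 1) (Pi.single j 1)

lemma dotProduct_hessianMatrix_mulVec {ι : Type*} [Fintype ι] [DecidableEq ι]
    (F : (ι → ℝ) → ℝ) (x v w : ι → ℝ) :
    v ⬝ᵥ hessianMatrix F x *ᵥ w = fderiv ℝ (fderiv ℝ F) x v w := by
  have h := LinearMap.congr_fun₂
    (Matrix.toLinearMap₂'_toMatrix' (R := ℝ) (fderiv ℝ (fderiv ℝ F) x).toLinearMap₁₂) v w
  rw [Matrix.toLinearMap₂'_apply'] at h
  exact h

theorem IsLocalMax.posSemidef_neg_hessianMatrix {ι : Type*} [Fintype ι] [DecidableEq ι]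
    {F : (ι → ℝ) → ℝ} {x : ι → ℝ} (h : IsLocalMax F x) (hF : ContDiff ℝ 2 F) :
    (-hessianMatrix F x).PosSemidef := by
  refine .of_dotProduct_mulVec_nonneg ?_ fun v => ?_
  · refine isHermitian_iff_isSymm.2 (IsSymm.neg ?_)
    ext i j
    exact (hF.contDiffAt.isSymmSndFDerivAt (by simp)) _ _
  · have hF' : Differentiable ℝ (fderiv ℝ F) :=
      (hF.fderiv_right (m := 1) (by norm_num)).differentiable one_ne_zero
    rw [neg_mulVec, dotProduct_neg, star_trivial, dotProduct_hessianMatrix_mulVec, neg_nonneg]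
    exact h.fderiv_fderiv_apply_self_nonpos (hF.differentiable two_ne_zero) (hF' x) v

theorem Matrix.PosSemidef.sum_mul_nonpos {ι : Type*} [Fintype ι] {A B : Matrix ι ι ℝ}
    (hA : A.PosSemidef) (hB : (-B).PosSemidef) : ∑ i, ∑ j, A i j * B i j ≤ 0 := by
  have := (hA.hadamard hB).dotProduct_mulVec_nonneg 1
  simp only [dotProduct, mulVec, hadamard_apply, star_trivial, Pi.one_apply, one_mul, mul_one,
    neg_apply, mul_neg, Finset.sum_neg_distrib] at this
  linarith

section
variable {m : ℕ}

lemma grad_add {u v : (Fin m → ℝ) → ℝ} {x : Fin m → ℝ} (hu : DifferentiableAt ℝ u x)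
    (hv : DifferentiableAt ℝ v x) : grad m (u + v) x = grad m u x + grad m v x := by
  ext i
  simp [grad, fderiv_add hu hv]

lemma grad_sub {u v : (Fin m → ℝ) → ℝ} {x : Fin m → ℝ} (hu : DifferentiableAt ℝ u x)
    (hv : DifferentiableAt ℝ v x) : grad m (u - v) x = grad m u x - grad m v x := by
  ext i
  simp [grad, fderiv_sub hu hv]

lemma grad_mul {u v : (Fin m → ℝ) → ℝ} {x : Fin m → ℝ} (hu : DifferentiableAt ℝ u x)
    (hv : DifferentiableAt ℝ v x) : grad m (u * v) x = u x • grad m v x + v x • grad m u x := by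
  ext i
  simp [grad, fderiv_mul hu hv]

lemma IsLocalMax.grad_eq_zero {F : (Fin m → ℝ) → ℝ} {x : Fin m → ℝ} (h : IsLocalMax F x) :
    grad m F x = 0 := by
  ext i
  simp [grad, h.fderiv_eq_zero]

lemma ContDiff.differentiable_fderiv_apply {E F : Type*} [NormedAddCommGroup E]
    [NormedSpace ℝ E] [NormedAddCommGroup F] [NormedSpace ℝ F] {w : E → F} (hw : ContDiff ℝ 2 w)
    (ξ : E) : Differentiable ℝ fun y => fderiv ℝ w y ξ :=
  ((hw.fderiv_right (m := 1) (by norm_num)).clm_apply contDiff_const).differentiable one_ne_zero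

variable {P : (Fin m → ℝ) → Matrix (Fin m) (Fin m) ℝ}

lemma mulVec_grad_apply_eq_sum (w : (Fin m → ℝ) → ℝ) (y : Fin m → ℝ) (i : Fin m) :
    (P y *ᵥ grad m w y) i = ∑ j, P y i j * fderiv ℝ w y (Pi.single j 1) := rfl

lemma differentiable_mulVec_grad_apply (hP : ∀ i j, Differentiable ℝ fun x => P x i j)
    {w : (Fin m → ℝ) → ℝ} (hw : ContDiff ℝ 2 w) (i : Fin m) :
    Differentiable ℝ fun y => (P y *ᵥ grad m w y) i := by
  simp only [mulVec_grad_apply_eq_sum]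
  exact Differentiable.fun_sum fun j _ => (hP i j).mul (hw.differentiable_fderiv_apply _)

lemma divPgrad_add (hP : ∀ i j, Differentiable ℝ fun x => P x i j) {u v : (Fin m → ℝ) → ℝ}
    (hu : ContDiff ℝ 2 u) (hv : ContDiff ℝ 2 v) (x : Fin m → ℝ) :
    divPgrad m P (u + v) x = divPgrad m P u x + divPgrad m P v x := by
  rw [divPgrad, divPgrad, divPgrad, ← Finset.sum_add_distrib]
  refine Finset.sum_congr rfl fun i _ => ?_
  have hsplit : (fun y => (P y *ᵥ grad m (u + v) y) i)
      = fun y => (P y *ᵥ grad m u y) i + (P y *ᵥ grad m v y) i := by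
    funext y
    rw [grad_add (hu.differentiable two_ne_zero y) (hv.differentiable two_ne_zero y), mulVec_add,
      Pi.add_apply]
  rw [hsplit, fderiv_fun_add (differentiable_mulVec_grad_apply hP hu i x)
    (differentiable_mulVec_grad_apply hP hv i x)]
  rfl

lemma divPgrad_sub (hP : ∀ i j, Differentiable ℝ fun x => P x i j) {u v : (Fin m → ℝ) → ℝ}
    (hu : ContDiff ℝ 2 u) (hv : ContDiff ℝ 2 v) (x : Fin m → ℝ) :
    divPgrad m P (u - v) x = divPgrad m P u x - divPgrad m P v x := by
  rw [divPgrad, divPgrad, divPgrad, ← Finset.sum_sub_distrib]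
  refine Finset.sum_congr rfl fun i _ => ?_
  have hsplit : (fun y => (P y *ᵥ grad m (u - v) y) i)
      = fun y => (P y *ᵥ grad m u y) i - (P y *ᵥ grad m v y) i := by
    funext y
    rw [grad_sub (hu.differentiable two_ne_zero y) (hv.differentiable two_ne_zero y), mulVec_sub,
      Pi.sub_apply]
  rw [hsplit, fderiv_fun_sub (differentiable_mulVec_grad_apply hP hu i x)
    (differentiable_mulVec_grad_apply hP hv i x)]
  rfl

lemma divPgrad_mul (hP : ∀ i j, Differentiable ℝ fun x => P x i j) {u v : (Fin m → ℝ) → ℝ}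
    (hu : ContDiff ℝ 2 u) (hv : ContDiff ℝ 2 v) (x : Fin m → ℝ) :
    divPgrad m P (u * v) x = u x * divPgrad m P v x + v x * divPgrad m P u x
      + grad m u x ⬝ᵥ P x *ᵥ grad m v x + grad m v x ⬝ᵥ P x *ᵥ grad m u x := by
  have hu' := hu.differentiable two_ne_zero
  have hv' := hv.differentiable two_ne_zero
  simp only [divPgrad, dotProduct, Finset.mul_sum, ← Finset.sum_add_distrib]
  refine Finset.sum_congr rfl fun i _ => ?_
  have hsplit : (fun y => (P y *ᵥ grad m (u * v) y) i)
      = fun y => u y * (P y *ᵥ grad m v y) i + v y * (P y *ᵥ grad m u y) i := by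
    funext y
    rw [grad_mul (hu' y) (hv' y), mulVec_add, mulVec_smul, mulVec_smul]
    rfl
  have hderiv :=
    ((hu' x).hasFDerivAt.fun_mul (differentiable_mulVec_grad_apply hP hv i x).hasFDerivAt).fun_add
      ((hv' x).hasFDerivAt.fun_mul (differentiable_mulVec_grad_apply hP hu i x).hasFDerivAt)
  rw [hsplit, hderiv.fderiv]
  simp only [_root_.add_apply, _root_.smul_apply, smul_eq_mul, grad]
  ring

lemma divPgrad_eq_sum (hP : ∀ i j, Differentiable ℝ fun x => P x i j) {w : (Fin m → ℝ) → ℝ}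
    (hw : ContDiff ℝ 2 w) (x : Fin m → ℝ) :
    divPgrad m P w x = ∑ i, ∑ j, (fderiv ℝ (fun y => P y i j) x (Pi.single i 1) * grad m w x j
      + P x i j * hessianMatrix w x i j) := by
  have hw' : Differentiable ℝ (fderiv ℝ w) :=
    (hw.fderiv_right (m := 1) (by norm_num)).differentiable one_ne_zero
  refine Finset.sum_congr rfl fun i _ => ?_
  simp only [mulVec_grad_apply_eq_sum]
  rw [fderiv_fun_sum fun j _ => ((hP i j) x).fun_mul (hw.differentiable_fderiv_apply _ x),
    _root_.sum_apply]
  refine Finset.sum_congr rfl fun j _ => ?_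
  rw [fderiv_fun_mul ((hP i j) x) (hw.differentiable_fderiv_apply _ x),
    fderiv_clm_apply (hw' x) (differentiableAt_const _)]
  simp only [fderiv_fun_const, Pi.zero_apply, ContinuousLinearMap.comp_zero, zero_add,
    _root_.add_apply, _root_.smul_apply, ContinuousLinearMap.flip_apply, smul_eq_mul, grad,
    hessianMatrix, of_apply]
  ring

variable (m P) in
noncomputable def ellipticOp (Rv : (Fin m → ℝ) → Fin m → ℝ) (w : (Fin m → ℝ) → ℝ)
    (x : Fin m → ℝ) : ℝ :=
  -divPgrad m P w x + Rv x ⬝ᵥ grad m w x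

variable {Rv : (Fin m → ℝ) → Fin m → ℝ}

lemma ellipticOp_add (hP : ∀ i j, Differentiable ℝ fun x => P x i j) {u v : (Fin m → ℝ) → ℝ}
    (hu : ContDiff ℝ 2 u) (hv : ContDiff ℝ 2 v) (x : Fin m → ℝ) :
    ellipticOp m P Rv (u + v) x = ellipticOp m P Rv u x + ellipticOp m P Rv v x := by
  rw [ellipticOp, divPgrad_add hP hu hv,
    grad_add (hu.differentiable two_ne_zero x) (hv.differentiable two_ne_zero x), dotProduct_add,
    ellipticOp, ellipticOp]
  ring

lemma ellipticOp_sub (hP : ∀ i j, Differentiable ℝ fun x => P x i j) {u v : (Fin m → ℝ) → ℝ}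
    (hu : ContDiff ℝ 2 u) (hv : ContDiff ℝ 2 v) (x : Fin m → ℝ) :
    ellipticOp m P Rv (u - v) x = ellipticOp m P Rv u x - ellipticOp m P Rv v x := by
  rw [ellipticOp, divPgrad_sub hP hu hv,
    grad_sub (hu.differentiable two_ne_zero x) (hv.differentiable two_ne_zero x), dotProduct_sub,
    ellipticOp, ellipticOp]
  ring

lemma ellipticOp_mul_self (hP : ∀ i j, Differentiable ℝ fun x => P x i j)
    {w : (Fin m → ℝ) → ℝ} (hw : ContDiff ℝ 2 w) (x : Fin m → ℝ) :
    ellipticOp m P Rv (w * w) x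
      = 2 * w x * ellipticOp m P Rv w x - 2 * (grad m w x ⬝ᵥ P x *ᵥ grad m w x) := by
  rw [ellipticOp, divPgrad_mul hP hw hw,
    grad_mul (hw.differentiable two_ne_zero x) (hw.differentiable two_ne_zero x), ellipticOp,
    dotProduct_add, dotProduct_smul, smul_eq_mul]
  ring

theorem ellipticOp_nonneg_of_isLocalMax (hP : ∀ i j, Differentiable ℝ fun x => P x i j)
    {F : (Fin m → ℝ) → ℝ} {x : Fin m → ℝ} (hPx : (P x).PosSemidef) (hF : ContDiff ℝ 2 F)
    (h : IsLocalMax F x) : 0 ≤ ellipticOp m P Rv F x := by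
  have hdiv : divPgrad m P F x = ∑ i, ∑ j, P x i j * hessianMatrix F x i j := by
    simp [divPgrad_eq_sum hP hF, h.grad_eq_zero]
  rw [ellipticOp, hdiv, h.grad_eq_zero, dotProduct_zero, add_zero, neg_nonneg]
  exact hPx.sum_mul_nonpos (h.posSemidef_neg_hessianMatrix hF)

theorem eq_zero_of_ellipticOp_system_eq_zero (hP : ∀ i j, Differentiable ℝ fun x => P x i j)
    {Ω : Set (Fin m → ℝ)} (hPΩ : ∀ x ∈ Ω, (P x).PosSemidef) {q1 q2 : (Fin m → ℝ) → ℝ}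
    (hq1 : ∀ x ∈ Ω, 0 < q1 x) {w1 w2 : (Fin m → ℝ) → ℝ} (hw1 : ContDiff ℝ 2 w1)
    (hw2 : ContDiff ℝ 2 w2) (hw1c : HasCompactSupport w1) (hw2c : HasCompactSupport w2)
    (hw1Ω : Function.support w1 ⊆ Ω) (hw2Ω : Function.support w2 ⊆ Ω)
    (heq1 : ∀ x ∈ Ω, ellipticOp m P Rv w1 x + q1 x * w1 x + q2 x * w2 x = 0)
    (heq2 : ∀ x ∈ Ω, ellipticOp m P Rv w2 x + q1 x * w2 x - q2 x * w1 x = 0) :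
    w1 = 0 ∧ w2 = 0 := by
  set F := w1 * w1 + w2 * w2
  have hF : ContDiff ℝ 2 F := (hw1.mul hw1).add (hw2.mul hw2)
  obtain ⟨x, hmax⟩ := hF.continuous.exists_forall_ge_of_hasCompactSupport
    (hw1c.mul_left.add hw2c.mul_left)
  suffices hFx : F x ≤ 0 by
    have hzero (y : Fin m → ℝ) : w1 y = 0 ∧ w2 y = 0 := by
      have hFy := (hmax y).trans hFx
      simp only [F, Pi.add_apply, Pi.mul_apply] at hFy
      constructor <;> nlinarith [mul_self_nonneg (w1 y), mul_self_nonneg (w2 y)]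
    exact ⟨funext fun y => (hzero y).1, funext fun y => (hzero y).2⟩
  by_contra! hFpos
  have hxΩ : x ∈ Ω := by
    by_contra hxΩ
    have h1 : w1 x = 0 := Function.notMem_support.1 fun h => hxΩ (hw1Ω h)
    have h2 : w2 x = 0 := Function.notMem_support.1 fun h => hxΩ (hw2Ω h)
    simp [F, h1, h2] at hFpos
  have hLF : 0 ≤ ellipticOp m P Rv F x :=
    ellipticOp_nonneg_of_isLocalMax hP (hPΩ x hxΩ) hF (Filter.Eventually.of_forall hmax)
  rw [ellipticOp_add (u := w1 * w1) (v := w2 * w2) hP (hw1.mul hw1) (hw2.mul hw2),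
    ellipticOp_mul_self hP hw1, ellipticOp_mul_self hP hw2] at hLF
  have hQ1 := (hPΩ x hxΩ).dotProduct_mulVec_nonneg (grad m w1 x)
  have hQ2 := (hPΩ x hxΩ).dotProduct_mulVec_nonneg (grad m w2 x)
  rw [star_trivial] at hQ1 hQ2
  have hqF := mul_pos (hq1 x hxΩ) hFpos
  simp only [F, Pi.add_apply, Pi.mul_apply] at hqF
  linarith [congrArg (w1 x * ·) (heq1 x hxΩ), congrArg (w2 x * ·) (heq2 x hxΩ)]

end

theorem stmt6_general (m : ℕ) (Ω : Set (Fin m → ℝ))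
    (P : (Fin m → ℝ) → Matrix (Fin m) (Fin m) ℝ)
    (hPc : ∀ i j, ContDiff ℝ 1 fun x => P x i j)
    (hPsymm : ∀ x ∈ Ω, (P x).IsSymm)
    (α : ℝ) (hα : 0 < α)
    (hell : ∀ x ∈ Ω, ∀ ξ : Fin m → ℝ, α * ∑ i, (ξ i) ^ 2 ≤ ξ ⬝ᵥ (P x).mulVec ξ)
    (Rv : (Fin m → ℝ) → Fin m → ℝ)
    (B : ℝ)
    (q1 q2 : (Fin m → ℝ) → ℝ)
    (hq1lb : ∀ x ∈ Ω, α / 2 + B ^ 2 / (2 * α) ≤ q1 x)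
    (f1 f2 : (Fin m → ℝ) → ℝ)
    (u1 u2 v1 v2 : (Fin m → ℝ) → ℝ)
    (hu1 : ContDiff ℝ 2 u1) (hu2 : ContDiff ℝ 2 u2)
    (hv1 : ContDiff ℝ 2 v1) (hv2 : ContDiff ℝ 2 v2)
    (hu1s : HasCompactSupport u1) (hu2s : HasCompactSupport u2)
    (hv1s : HasCompactSupport v1) (hv2s : HasCompactSupport v2)
    (hu1Ω : tsupport u1 ⊆ Ω) (hu2Ω : tsupport u2 ⊆ Ω)
    (hv1Ω : tsupport v1 ⊆ Ω) (hv2Ω : tsupport v2 ⊆ Ω)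
    (hueq1 : ∀ x ∈ Ω,
      -divPgrad m P u1 x + Rv x ⬝ᵥ grad m u1 x + q1 x * u1 x + q2 x * u2 x = f1 x)
    (hueq2 : ∀ x ∈ Ω,
      -divPgrad m P u2 x + Rv x ⬝ᵥ grad m u2 x + q1 x * u2 x - q2 x * u1 x = f2 x)
    (hveq1 : ∀ x ∈ Ω,
      -divPgrad m P v1 x + Rv x ⬝ᵥ grad m v1 x + q1 x * v1 x + q2 x * v2 x = f1 x)
    (hveq2 : ∀ x ∈ Ω,
      -divPgrad m P v2 x + Rv x ⬝ᵥ grad m v2 x + q1 x * v2 x - q2 x * v1 x = f2 x) :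
    u1 = v1 ∧ u2 = v2 := by
  have hP : ∀ i j, Differentiable ℝ fun x => P x i j := fun i j =>
    (hPc i j).differentiable one_ne_zero
  have hPΩ : ∀ x ∈ Ω, (P x).PosSemidef := fun x hx =>
    .of_dotProduct_mulVec_nonneg (isHermitian_iff_isSymm.2 (hPsymm x hx)) fun ξ =>
      (by positivity : 0 ≤ α * ∑ i, ξ i ^ 2).trans (hell x hx ξ)
  have hq1 : ∀ x ∈ Ω, 0 < q1 x := fun x hx =>
    lt_of_lt_of_le (by positivity) (hq1lb x hx)
  have hsupp {u v : (Fin m → ℝ) → ℝ} (hu : tsupport u ⊆ Ω) (hv : tsupport v ⊆ Ω) :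
      Function.support (u - v) ⊆ Ω :=
    (Function.support_sub u v).trans
      (Set.union_subset ((subset_tsupport u).trans hu) ((subset_tsupport v).trans hv))
  obtain ⟨h1, h2⟩ := eq_zero_of_ellipticOp_system_eq_zero (Rv := Rv) (q2 := q2)
    (w1 := u1 - v1) (w2 := u2 - v2) hP hPΩ hq1
    (hu1.sub hv1) (hu2.sub hv2) (hu1s.sub hv1s) (hu2s.sub hv2s) (hsupp hu1Ω hv1Ω) (hsupp hu2Ω hv2Ω)
    (fun x hx => by
      rw [ellipticOp_sub hP hu1 hv1]
      simp only [ellipticOp, Pi.sub_apply]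
      linear_combination hueq1 x hx - hveq1 x hx)
    (fun x hx => by
      rw [ellipticOp_sub hP hu2 hv2]
      simp only [ellipticOp, Pi.sub_apply]
      linear_combination hueq2 x hx - hveq2 x hx)
  exact ⟨sub_eq_zero.1 h1, sub_eq_zero.1 h2⟩

theorem stmt6 (m : ℕ) (hm : 1 ≤ m)
    (Ω : Set (Fin m → ℝ)) (hΩo : IsOpen Ω) (hΩb : Bornology.IsBounded Ω)
    (P : (Fin m → ℝ) → Matrix (Fin m) (Fin m) ℝ)
    (hPc : ∀ i j, ContDiff ℝ 1 fun x => P x i j)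
    (hPsymm : ∀ x ∈ Ω, (P x).IsSymm)
    (α : ℝ) (hα : 0 < α)
    (hell : ∀ x ∈ Ω, ∀ ξ : Fin m → ℝ, α * ∑ i, (ξ i) ^ 2 ≤ ξ ⬝ᵥ (P x).mulVec ξ)
    (Rv : (Fin m → ℝ) → Fin m → ℝ) (hRc : Continuous Rv)
    (R : Fin m → ℝ) (hRbd : ∀ x ∈ Ω, ∀ k, |Rv x k| ≤ R k)
    (B : ℝ) (hB : B = Real.sqrt (∑ k, (R k) ^ 2))
    (q1 q2 : (Fin m → ℝ) → ℝ) (hq1c : Continuous q1) (hq2c : Continuous q2)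
    (hq1lb : ∀ x ∈ Ω, α / 2 + B ^ 2 / (2 * α) ≤ q1 x)
    (f1 f2 : (Fin m → ℝ) → ℝ)
    (u1 u2 v1 v2 : (Fin m → ℝ) → ℝ)
    (hu1 : ContDiff ℝ 2 u1) (hu2 : ContDiff ℝ 2 u2)
    (hv1 : ContDiff ℝ 2 v1) (hv2 : ContDiff ℝ 2 v2)
    (hu1s : HasCompactSupport u1) (hu2s : HasCompactSupport u2)
    (hv1s : HasCompactSupport v1) (hv2s : HasCompactSupport v2)
    (hu1Ω : tsupport u1 ⊆ Ω) (hu2Ω : tsupport u2 ⊆ Ω)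
    (hv1Ω : tsupport v1 ⊆ Ω) (hv2Ω : tsupport v2 ⊆ Ω)
    (hueq1 : ∀ x ∈ Ω,
      -divPgrad m P u1 x + Rv x ⬝ᵥ grad m u1 x + q1 x * u1 x + q2 x * u2 x = f1 x)
    (hueq2 : ∀ x ∈ Ω,
      -divPgrad m P u2 x + Rv x ⬝ᵥ grad m u2 x + q1 x * u2 x - q2 x * u1 x = f2 x)
    (hveq1 : ∀ x ∈ Ω,
      -divPgrad m P v1 x + Rv x ⬝ᵥ grad m v1 x + q1 x * v1 x + q2 x * v2 x = f1 x)
    (hveq2 : ∀ x ∈ Ω,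
      -divPgrad m P v2 x + Rv x ⬝ᵥ grad m v2 x + q1 x * v2 x - q2 x * v1 x = f2 x) :
    u1 = v1 ∧ u2 = v2 :=
  stmt6_general m Ω P hPc hPsymm α hα hell Rv B q1 q2 hq1lb f1 f2 u1 u2 v1 v2 hu1 hu2 hv1 hv2 hu1s
    hu2s hv1s hv2s hu1Ω hu2Ω hv1Ω hv2Ω hueq1 hueq2 hveq1 hveq2
end
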